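/- For a ∈ ℝ³ let S(a) denote the 3×3 real skew-symmetric matrix with S(a)·b = a × b, and set T = S(ω̇) + S(ω)² for given ω, ω̇ ∈ ℝ³. Let N ∈ ℕ, fix an index i ∈ {1, …, N}, and let the following data be given: scalars m_j, d_j, k_j for j = 1, …, N; vectors p_i, ṗ_i, p̈_i ∈ ℝ³; for each j vectors p_j^d, ṗ_j^d, p̈_j^d, f_j^d, f_j ∈ ℝ³; a matrix R ∈ ℝ^{3×3}; vectors ᵒr_{j,i} ∈ ℝ³ for j ≠ i (and ᵒr_{i,i} = 0), ᵒr_i ∈ ℝ³; a scalar m_o; and g ∈ ℝ³. Assume: (i) for every j, f_j = m_j·(p̈_i + T·R·ᵒr_{j,i} − p̈_j^d) + d_j·(ṗ_i + S(ω)·R·ᵒr_{j,i} − ṗ_j^d) + k_j·(p_i + R·ᵒr_{j,i} − p_j^d) + f_j^d; and (ii) m_o·(p̈_i − T·R·ᵒr_i − g) = −Σ_{j=1}^N f_j. Then, with m_c = Σ_j m_j, d_c = Σ_j d_j, k_c = Σ_j k_j, the vector y_i = Σ_{j=1}^N (m_j·p̈_j^d + d_j·ṗ_j^d + k_j·p_j^d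 − f_j^d) − m_c·p̈_i − d_c·ṗ_i − k_c·p_i satisfies y_i = Σ_{j≠i} (m_j·T + d_j·S(ω) + k_j·I₃)·R·ᵒr_{j,i} − T·R·(m_o·ᵒr_i) + m_o·(p̈_i − g). -/

import Mathlib

/-!
Summing the impedance laws of all agents, the gains multiply the common state of agent `i`
and so collect into `m_c`, `d_c`, `k_c`; what remains of the sum is the linear-in-offset
term `∑_j (m_j T + d_j S(ω) + k_j I) R ᵒr_{j,i}` minus `∑_j f_j`, and the object dynamics
replaces `−∑_j f_j` by `m_o (p̈_i − T R ᵒr_i − g)`. The summand for `j = i` vanishes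
because `ᵒr_{i,i} = 0`.
-/

open Matrix Finset

theorem sum_impedance_eq_sum_offset_sub_sum_force {R M ι : Type*} [CommRing R] [AddCommGroup M]
    [Module R M] [Fintype ι] (m d k : ι → R) (a b c : M) (u v w x y z e f : ι → M)
    (hf : ∀ j, f j = m j • (a + u j - x j) + d j • (b + v j - y j)
      + k j • (c + w j - z j) + e j) :
    ∑ j, (m j • x j + d j • y j + k j • z j - e j)
        - (∑ j, m j) • a - (∑ j, d j) • b - (∑ j, k j) • c
      = ∑ j, (m j • u j + d j • v j + k j • w j) - ∑ j, f j := by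
  simp only [Finset.sum_smul, ← Finset.sum_sub_distrib]
  refine Finset.sum_congr rfl fun j _ => ?_
  rw [hf]
  module

theorem gain_matrix_mul_mulVec {R n : Type*} [CommRing R] [Fintype n] [DecidableEq n]
    (m d k : R) (A B P : Matrix n n R) (v : n → R) :
    ((m • A + d • B + k • (1 : Matrix n n R)) * P) *ᵥ v
      = m • A *ᵥ (P *ᵥ v) + d • B *ᵥ (P *ᵥ v) + k • P *ᵥ v := by
  simp only [add_mul, smul_mul, one_mul, add_mulVec, smul_mulVec, mulVec_mulVec]

theorem generalized_linear_translational_model_general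
    (S : (Fin 3 → ℝ) → Matrix (Fin 3) (Fin 3) ℝ)
    (ω : Fin 3 → ℝ) (T : Matrix (Fin 3) (Fin 3) ℝ)
    (N : ℕ) (i : Fin N) (m d k : Fin N → ℝ)
    (p_i dp_i ddp_i : Fin 3 → ℝ)
    (pd dpd ddpd fd f : Fin N → Fin 3 → ℝ)
    (R : Matrix (Fin 3) (Fin 3) ℝ)
    (r : Fin N → Fin 3 → ℝ) (hrii : r i = 0) (ro : Fin 3 → ℝ)
    (mo : ℝ) (g : Fin 3 → ℝ)
    (hf : ∀ j, f j =
        m j • (ddp_i + T *ᵥ (R *ᵥ r j) - ddpd j)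
        + d j • (dp_i + S ω *ᵥ (R *ᵥ r j) - dpd j)
        + k j • (p_i + R *ᵥ r j - pd j) + fd j)
    (hobj : mo • (ddp_i - T *ᵥ (R *ᵥ ro) - g) = -∑ j, f j) :
    (∑ j, (m j • ddpd j + d j • dpd j + k j • pd j - fd j))
        - (∑ j, m j) • ddp_i - (∑ j, d j) • dp_i - (∑ j, k j) • p_i
      = (∑ j ∈ Finset.univ.erase i,
          ((m j • T + d j • S ω + k j • (1 : Matrix (Fin 3) (Fin 3) ℝ)) * R) *ᵥ r j)
        - (T * R) *ᵥ (mo • ro) + mo • (ddp_i - g) := by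
  rw [sum_impedance_eq_sum_offset_sub_sum_force m d k _ _ _ _ _ _ _ _ _ _ f hf,
    sub_eq_add_neg _ (∑ j, f j), ← hobj, Finset.sum_erase _ (by simp [hrii])]
  simp only [gain_matrix_mul_mulVec, mulVec_smul]
  rw [← mulVec_mulVec]
  module

/-- Generalized linear translational model for cooperative manipulation (equations
(12)–(14) of the paper): under the impedance dynamics of every agent `j` expressed in the
states of agent `i` (hypothesis `hf`, using the rigid-body kinematics), and the
translational object dynamics (hypothesis `hobj`), the locally computable output
`y_i = ∑_j (m_j·p̈_j^d + d_j·ṗ_j^d + k_j·p_j^d − f_j^d) − m_c·p̈_i − d_c·ṗ_i − k_c·p_i`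
equals the linear-in-parameters expression
`∑_{j≠i} (m_j·T + d_j·S(ω) + k_j·I)·R·ᵒr_{j,i} − T·R·(m_o·ᵒr_i) + m_o·(p̈_i − g)`.
Here `p_i, dp_i, ddp_i` are the pose/velocity/acceleration of agent `i`;
`pd, dpd, ddpd, fd` are the desired poses/velocities/accelerations/forces of the agents;
`r j` is the grasp offset `ᵒr_{j,i}` (with `r i = 0`), `ro = ᵒr_i`, `mo = m_o`. -/
theorem generalized_linear_translational_model
    (S : (Fin 3 → ℝ) → Matrix (Fin 3) (Fin 3) ℝ)
    (hS : ∀ a b : Fin 3 → ℝ, S a *ᵥ b = crossProduct a b)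
    (ω ωdot : Fin 3 → ℝ) (T : Matrix (Fin 3) (Fin 3) ℝ) (hT : T = S ωdot + S ω ^ 2)
    (N : ℕ) (i : Fin N) (m d k : Fin N → ℝ)
    (p_i dp_i ddp_i : Fin 3 → ℝ)
    (pd dpd ddpd fd f : Fin N → Fin 3 → ℝ)
    (R : Matrix (Fin 3) (Fin 3) ℝ)
    (r : Fin N → Fin 3 → ℝ) (hrii : r i = 0) (ro : Fin 3 → ℝ)
    (mo : ℝ) (g : Fin 3 → ℝ)
    (hf : ∀ j, f j =
        m j • (ddp_i + T *ᵥ (R *ᵥ r j) - ddpd j)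
        + d j • (dp_i + S ω *ᵥ (R *ᵥ r j) - dpd j)
        + k j • (p_i + R *ᵥ r j - pd j) + fd j)
    (hobj : mo • (ddp_i - T *ᵥ (R *ᵥ ro) - g) = -∑ j, f j) :
    (∑ j, (m j • ddpd j + d j • dpd j + k j • pd j - fd j))
        - (∑ j, m j) • ddp_i - (∑ j, d j) • dp_i - (∑ j, k j) • p_i
      = (∑ j ∈ Finset.univ.erase i,
          ((m j • T + d j • S ω + k j • (1 : Matrix (Fin 3) (Fin 3) ℝ)) * R) *ᵥ r j)
        - (T * R) *ᵥ (mo • ro) + mo • (ddp_i - g) :=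
  generalized_linear_translational_model_general S ω T N i m d k p_i dp_i ddp_i pd dpd ddpd fd f R r
    hrii ro mo g hf hobj
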